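/- Let μ be a probability measure on a measurable space Ω and let A, B, C be pairwise disjoint measurable sets with A ∪ B ∪ C = Ω and μ(A) > 0. Let T be a measurable set with μ(T) > 0 and μ[T | A] > 0, and let ε ≥ 0 be real. Assume μ(T ∩ B) ≥ exp(−2ε)·μ[T | A]·μ(B) and μ(T ∩ C) ≥ exp(−ε)·μ[T | A]·μ(C). Then μ[A | T] ≤ exp(2ε)·μ(A). -/

import Mathlib

open MeasureTheory

/-- Conditional probability `μ[A | B] = μ(A ∩ B) / μ(B)` as a real number. -/
noncomputable def condP {Ω : Type*} [MeasurableSpace Ω] (μ : Measure Ω) (A B : Set Ω) : ℝ :=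
  (μ (A ∩ B)).toReal / (μ B).toReal

/-!
Write `p = μ[T | A]`. Splitting `T` along the partition `A, B, C` and using the two hypotheses
(together with `exp (-2ε) ≤ exp (-ε) ≤ 1`) gives
`μ T ≥ exp (-2ε) · p · (μ A + μ B + μ C) = exp (-2ε) · p`, so
`μ[A | T] = p · μ A / μ T ≤ exp (2ε) · μ A`.
-/

section

variable {Ω : Type*} [MeasurableSpace Ω] (μ : Measure Ω)

theorem condP_nonneg (A B : Set Ω) : 0 ≤ condP μ A B :=
  div_nonneg ENNReal.toReal_nonneg ENNReal.toReal_nonneg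

theorem condP_mul_measure [IsFiniteMeasure μ] (A B : Set Ω) :
    condP μ A B * (μ B).toReal = (μ (A ∩ B)).toReal := by
  by_cases hB : μ B = 0
  · simp [hB, measure_mono_null Set.inter_subset_right hB]
  · exact div_mul_cancel₀ _ (ENNReal.toReal_ne_zero.2 ⟨hB, measure_ne_top μ B⟩)

-- Carathéodory splitting of `T ∩ (U ∪ C)` along the measurable set `C`.
theorem measure_inter_union_of_disjoint {U C : Set Ω} (hC : MeasurableSet C) (hUC : Disjoint U C)
    (T : Set Ω) : μ (T ∩ (U ∪ C)) = μ (T ∩ U) + μ (T ∩ C) := by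
  rw [← measure_inter_add_sdiff (T ∩ (U ∪ C)) hC, add_comm, Set.inter_assoc,
    Set.union_inter_cancel_right, Set.inter_sdiff_assoc, Set.union_sdiff_right,
    hUC.sdiff_eq_left]

theorem toReal_measure_eq_add_of_partition [IsFiniteMeasure μ] {A B C : Set Ω}
    (hB : MeasurableSet B) (hC : MeasurableSet C)
    (hAB : Disjoint A B) (hAC : Disjoint A C) (hBC : Disjoint B C)
    (hUnion : A ∪ B ∪ C = Set.univ) (T : Set Ω) :
    (μ T).toReal = (μ (T ∩ A)).toReal + (μ (T ∩ B)).toReal + (μ (T ∩ C)).toReal := by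
  have h := measure_inter_union_of_disjoint μ hC (hAC.union_left hBC) T
  rw [measure_inter_union_of_disjoint μ hB hAB T, hUnion, Set.inter_univ] at h
  rw [h, ENNReal.toReal_add (by finiteness) (by finiteness),
    ENNReal.toReal_add (by finiteness) (by finiteness)]

theorem exp_neg_two_mul_mul_condP_le [IsProbabilityMeasure μ] {A B C T : Set Ω}
    (hB : MeasurableSet B) (hC : MeasurableSet C)
    (hAB : Disjoint A B) (hAC : Disjoint A C) (hBC : Disjoint B C)
    (hUnion : A ∪ B ∪ C = Set.univ) {ε : ℝ} (hε : 0 ≤ ε)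
    (h1 : Real.exp (-(2*ε)) * condP μ T A * (μ B).toReal ≤ (μ (T ∩ B)).toReal)
    (h2 : Real.exp (-ε) * condP μ T A * (μ C).toReal ≤ (μ (T ∩ C)).toReal) :
    Real.exp (-(2*ε)) * condP μ T A ≤ (μ T).toReal := by
  set p := condP μ T A
  have hp : 0 ≤ p := condP_nonneg μ T A
  have hsplit := toReal_measure_eq_add_of_partition μ hB hC hAB hAC hBC hUnion
  have htotal : (μ A).toReal + (μ B).toReal + (μ C).toReal = 1 := by
    simpa using (hsplit Set.univ).symm
  have hexp_le_one : Real.exp (-(2*ε)) ≤ 1 := Real.exp_le_one_iff.2 (by linarith)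
  have hexp_mono : Real.exp (-(2*ε)) ≤ Real.exp (-ε) := Real.exp_le_exp.2 (by linarith)
  calc Real.exp (-(2*ε)) * p
      = Real.exp (-(2*ε)) * p * (μ A).toReal + Real.exp (-(2*ε)) * p * (μ B).toReal
          + Real.exp (-(2*ε)) * p * (μ C).toReal := by
        rw [← mul_add, ← mul_add, htotal, mul_one]
    _ ≤ 1 * p * (μ A).toReal + (μ (T ∩ B)).toReal + Real.exp (-ε) * p * (μ C).toReal := by
        gcongr
    _ ≤ (μ (T ∩ A)).toReal + (μ (T ∩ B)).toReal + (μ (T ∩ C)).toReal := by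
        rw [one_mul, condP_mul_measure]
        linarith
    _ = (μ T).toReal := (hsplit T).symm

end

theorem stmt_4_general {Ω : Type*} [MeasurableSpace Ω] (μ : Measure Ω) [IsProbabilityMeasure μ]
    (A B C T : Set Ω)
    (hB : MeasurableSet B) (hC : MeasurableSet C)
    (hAB : Disjoint A B) (hAC : Disjoint A C) (hBC : Disjoint B C)
    (hUnion : A ∪ B ∪ C = Set.univ)
    (ε : ℝ) (hε : 0 ≤ ε)
    (h1 : Real.exp (-(2*ε)) * condP μ T A * (μ B).toReal ≤ (μ (T ∩ B)).toReal)
    (h2 : Real.exp (-ε) * condP μ T A * (μ C).toReal ≤ (μ (T ∩ C)).toReal) :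
    condP μ A T ≤ Real.exp (2*ε) * (μ A).toReal := by
  have hlower := exp_neg_two_mul_mul_condP_le μ hB hC hAB hAC hBC hUnion hε h1 h2
  refine div_le_of_le_mul₀ ENNReal.toReal_nonneg (by positivity) ?_
  calc (μ (A ∩ T)).toReal
      = Real.exp (2*ε) * (μ A).toReal * (Real.exp (-(2*ε)) * condP μ T A) := by
        rw [Set.inter_comm, ← condP_mul_measure, mul_mul_mul_comm, ← Real.exp_add]
        simp [mul_comm]
    _ ≤ Real.exp (2*ε) * (μ A).toReal * (μ T).toReal := by gcongr

theorem stmt_4 {Ω : Type*} [MeasurableSpace Ω] (μ : Measure Ω) [IsProbabilityMeasure μ]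
    (A B C T : Set Ω)
    (hA : MeasurableSet A) (hB : MeasurableSet B) (hC : MeasurableSet C)
    (hT : MeasurableSet T)
    (hAB : Disjoint A B) (hAC : Disjoint A C) (hBC : Disjoint B C)
    (hUnion : A ∪ B ∪ C = Set.univ)
    (hA0 : 0 < (μ A).toReal) (hT0 : 0 < (μ T).toReal) (hTA : 0 < condP μ T A)
    (ε : ℝ) (hε : 0 ≤ ε)
    (h1 : Real.exp (-(2*ε)) * condP μ T A * (μ B).toReal ≤ (μ (T ∩ B)).toReal)
    (h2 : Real.exp (-ε) * condP μ T A * (μ C).toReal ≤ (μ (T ∩ C)).toReal) :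
    condP μ A T ≤ Real.exp (2*ε) * (μ A).toReal :=
  stmt_4_general μ A B C T hB hC hAB hAC hBC hUnion ε hε h1 h2
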